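/- The group SO(3,ℝ) contains an element g such that every Engel sink of g is uncountable. -/
import Mathlib


/-- The left-normed iterated commutator `[x, ₙg]`: `engel g x 0 = x` and
`engel g x (n+1) = [engel g x n, g] = (engel g x n)⁻¹ * g⁻¹ * (engel g x n) * g`. -/
def engel {G : Type*} [Group G] (g x : G) : ℕ → G
  | 0 => x
  | n + 1 => (engel g x n)⁻¹ * g⁻¹ * engel g x n * g

/-- `E` is an Engel sink of `g`: for every `x` all sufficiently long commutators
`[x, ₙg]` lie in `E`. -/
def IsEngelSink {G : Type*} [Group G] (g : G) (E : Set G) : Prop :=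
  ∀ x : G, ∃ N : ℕ, ∀ n : ℕ, N ≤ n → engel g x n ∈ E

/-- `SO(3,ℝ)`: the subgroup of the orthogonal group `O(3,ℝ)` of matrices of determinant 1. -/
def SO3 : Subgroup (Matrix.orthogonalGroup (Fin 3) ℝ) where
  carrier := {A | (A : Matrix (Fin 3) (Fin 3) ℝ).det = 1}
  one_mem' := by simp
  mul_mem' := by
    intro A B hA hB
    simp only [Set.mem_setOf_eq, Matrix.UnitaryGroup.mul_val, Matrix.det_mul] at *
    rw [hA, hB, one_mul]
  inv_mem' := by
    intro A hA
    simp only [Set.mem_setOf_eq] at *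
    rw [Matrix.UnitaryGroup.inv_val, Matrix.star_eq_conjTranspose,
      Matrix.det_conjTranspose, hA, star_one]

/-! ### Auxiliary constructions: rotations about the `z`-axis and `g = diag(-1,1,-1)` -/

/-- Rotation by angle `θ` about the `z`-axis, as a matrix. -/
noncomputable def rotM (θ : ℝ) : Matrix (Fin 3) (Fin 3) ℝ :=
  !![Real.cos θ, -Real.sin θ, 0; Real.sin θ, Real.cos θ, 0; 0, 0, 1]

/-- The matrix `diag(-1, 1, -1)`. -/
def gM : Matrix (Fin 3) (Fin 3) ℝ := !![-1, 0, 0; 0, 1, 0; 0, 0, -1]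

lemma rotM_mem (θ : ℝ) : rotM θ ∈ Matrix.orthogonalGroup (Fin 3) ℝ := by
  rw [Matrix.mem_orthogonalGroup_iff]
  ext i j
  fin_cases i <;> fin_cases j <;>
    simp [rotM, Matrix.mul_apply, Fin.sum_univ_three, Matrix.star_eq_conjTranspose,
      Matrix.transpose, Matrix.vecHead, Matrix.vecTail] <;>
    nlinarith [Real.sin_sq_add_cos_sq θ]

lemma gM_mem : gM ∈ Matrix.orthogonalGroup (Fin 3) ℝ := by
  rw [Matrix.mem_orthogonalGroup_iff]
  ext i j
  fin_cases i <;> fin_cases j <;>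
    simp [gM, Matrix.mul_apply, Fin.sum_univ_three, Matrix.star_eq_conjTranspose,
      Matrix.transpose, Matrix.vecHead, Matrix.vecTail]

lemma rotM_det (θ : ℝ) : (rotM θ).det = 1 := by
  simp [rotM, Matrix.det_fin_three]
  nlinarith [Real.sin_sq_add_cos_sq θ]

lemma gM_det : gM.det = 1 := by
  simp [gM, Matrix.det_fin_three]

lemma rotM_mul (a b : ℝ) : rotM a * rotM b = rotM (a + b) := by
  ext i j
  fin_cases i <;> fin_cases j <;>
    simp [rotM, Matrix.mul_apply, Fin.sum_univ_three, Real.cos_add, Real.sin_add] <;> ring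

lemma rotM_zero : rotM 0 = 1 := by
  ext i j
  fin_cases i <;> fin_cases j <;>
    simp [rotM, Matrix.one_apply, Matrix.vecHead, Matrix.vecTail]

lemma gM_conj (θ : ℝ) : gM * rotM θ * gM = rotM (-θ) := by
  ext i j
  fin_cases i <;> fin_cases j <;>
    simp [rotM, gM, Matrix.mul_apply, Fin.sum_univ_three, Matrix.vecHead, Matrix.vecTail]

/-- The rotation by `θ` as an element of the orthogonal group. -/
noncomputable def rotE (θ : ℝ) : Matrix.orthogonalGroup (Fin 3) ℝ := ⟨rotM θ, rotM_mem θ⟩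

/-- `diag(-1,1,-1)` as an element of the orthogonal group. -/
def gE : Matrix.orthogonalGroup (Fin 3) ℝ := ⟨gM, gM_mem⟩

/-- The rotation by `θ` as an element of `SO3`. -/
noncomputable def rot (θ : ℝ) : SO3 := ⟨rotE θ, rotM_det θ⟩

/-- `diag(-1,1,-1)` as an element of `SO3`. -/
def gg : SO3 := ⟨gE, gM_det⟩

lemma rot_mul (a b : ℝ) : rot a * rot b = rot (a + b) := by
  apply Subtype.ext; apply Subtype.ext
  exact rotM_mul a b

lemma rot_zero : rot 0 = 1 := by
  apply Subtype.ext; apply Subtype.ext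
  exact rotM_zero

lemma rot_inv (a : ℝ) : (rot a)⁻¹ = rot (-a) := by
  apply inv_eq_of_mul_eq_one_right
  rw [rot_mul, add_neg_cancel, rot_zero]

lemma gg_inv : gg⁻¹ = gg := by
  apply inv_eq_of_mul_eq_one_right
  apply Subtype.ext; apply Subtype.ext
  show gM * gM = 1
  ext i j
  fin_cases i <;> fin_cases j <;>
    simp [gM, Matrix.mul_apply, Fin.sum_univ_three, Matrix.one_apply,
      Matrix.vecHead, Matrix.vecTail]

lemma gg_conj (θ : ℝ) : gg⁻¹ * rot θ * gg = rot (-θ) := by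
  rw [gg_inv]
  apply Subtype.ext; apply Subtype.ext
  exact gM_conj θ

/-- The key computation: `[rot θ, ₙ g] = rot ((-2)ⁿ θ)`. -/
lemma engel_rot (θ : ℝ) (n : ℕ) : engel gg (rot θ) n = rot ((-2) ^ n * θ) := by
  induction n with
  | zero => simp [engel]
  | succ n ih =>
    show _⁻¹ * gg⁻¹ * _ * gg = _
    rw [ih, mul_assoc, mul_assoc, ← mul_assoc gg⁻¹, gg_conj, rot_inv, rot_mul]
    ring_nf

lemma rot_eq (a b : ℝ) (h : rot a = rot b) : ∃ k : ℤ, (k : ℝ) * (2 * Real.pi) = a - b := by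
  have hM : rotM a = rotM b :=
    congrArg (fun x : SO3 => ((x : Matrix.orthogonalGroup (Fin 3) ℝ) : Matrix (Fin 3) (Fin 3) ℝ)) h
  have hc : Real.cos a = Real.cos b := by
    have := congrFun (congrFun hM 0) 0
    simpa [rotM] using this
  have hs : Real.sin a = Real.sin b := by
    have := congrFun (congrFun hM 1) 0
    simpa [rotM, Matrix.vecHead, Matrix.vecTail] using this
  have h1 : Real.cos (a - b) = 1 := by
    rw [Real.cos_sub, hc, hs]
    nlinarith [Real.sin_sq_add_cos_sq b]
  exact (Real.cos_eq_one_iff _).1 h1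

/-- Each "fiber" `{θ | [rot θ, ₙ g] = e}` is countable. -/
lemma fiber_countable (e : SO3) (n : ℕ) :
    {θ : ℝ | engel gg (rot θ) n = e}.Countable := by
  set c : ℝ := (-2) ^ n with hc
  have hc0 : c ≠ 0 := by positivity
  rcases Set.eq_empty_or_nonempty {θ : ℝ | engel gg (rot θ) n = e} with h | ⟨θ₀, hθ₀⟩
  · simp [h]
  · have : {θ : ℝ | engel gg (rot θ) n = e} ⊆
        Set.range (fun k : ℤ => θ₀ + (k : ℝ) * (2 * Real.pi) / c) := by
      intro θ hθ
      have he : rot (c * θ) = rot (c * θ₀) := by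
        rw [← engel_rot, ← engel_rot]
        exact hθ.trans hθ₀.symm
      obtain ⟨k, hk⟩ := rot_eq _ _ he
      exact ⟨k, by field_simp at hk ⊢; linarith⟩
    exact (Set.countable_range _).mono this

/-- The group `SO(3,ℝ)` contains an element `g` all of whose Engel sinks are uncountable. -/
theorem so3_has_element_with_uncountable_sinks :
    ∃ g : SO3, ∀ E : Set SO3, IsEngelSink g E → ¬ E.Countable := by
  refine ⟨gg, fun E hE hcnt => Cardinal.not_countable_real ?_⟩
  have hsub : (Set.univ : Set ℝ) ⊆ ⋃ e ∈ E, ⋃ n : ℕ, {θ : ℝ | engel gg (rot θ) n = e} := by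
    intro θ _
    obtain ⟨N, hN⟩ := hE (rot θ)
    exact Set.mem_biUnion (hN N le_rfl) (Set.mem_iUnion.2 ⟨N, rfl⟩)
  refine Set.Countable.mono hsub ?_
  exact hcnt.biUnion fun e _ => Set.countable_iUnion fun n => fiber_countable e n
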